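/- arXiv:1310.6619 — 2 statements merged into one kernel-verified Lean document; each statement's English description precedes it below -/
import Mathlib

section
/- Let 1 ≤ p < 2 and let g be a measurable function on the unit circle such that g·f ∈ L^p(𝕋) for every f ∈ L^2(𝕋). Then g ∈ L^{2p/(2-p)}(𝕋). -/
/-!
By the closed graph theorem, multiplication by `g` is a bounded operator `L² → Lᵖ`, of norm `C`
say. Let `r = 2p/(2-p)`, so that `r/p = r/2 + 1`, and let `gₙ` be `g` cut off where `‖g‖ > n`.
Testing the operator on `f = ‖gₙ‖ ^ (r/2)` gives `‖gₙ‖ᵣ ^ (r/2 + 1) ≤ C ‖gₙ‖ᵣ ^ (r/2)`, and since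
`gₙ` is bounded this means `‖gₙ‖ᵣ ≤ C`. Fatou's lemma then gives `‖g‖ᵣ ≤ C`.
-/

open MeasureTheory Complex ComplexConjugate
open scoped ENNReal

noncomputable section

instance : Fact ((0:ℝ) < 1) := ⟨zero_lt_one⟩

abbrev T1 := AddCircle (1:ℝ)

def zfun : T1 → ℂ := fun t => fourier 1 t

def hInner (f g : T1 → ℂ) : ℂ := ∫ t, f t * conj (g t)

def MemHp (p : ℝ≥0∞) (f : T1 → ℂ) : Prop :=
  MemLp f p volume ∧ ∀ n : ℤ, n < 0 → fourierCoeff f n = 0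

def blaschke {n : ℕ} (α : Fin n → ℂ) : T1 → ℂ :=
  fun t => ∏ i, (zfun t - α i) / (1 - conj (α i) * zfun t)

def MemH2B (B f : T1 → ℂ) : Prop :=
  MemHp 2 f ∧ ∀ ε : ℝ, 0 < ε → ∃ c : ℕ →₀ ℂ,
    eLpNorm (fun t => f t - ∑ m ∈ c.support, c m * (B t) ^ m) 2 volume < ENNReal.ofReal ε

open Filter Topology
open scoped NNReal

theorem ENNReal.le_of_rpow_add_one_le_mul_rpow {x C : ℝ≥0∞} {b : ℝ} (hx : x ≠ ∞) (hb : 0 < b)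
    (h : x ^ (b + 1) ≤ C * x ^ b) : x ≤ C := by
  rcases eq_or_ne x 0 with rfl | hx0
  · exact zero_le
  rw [ENNReal.rpow_add _ _ hx0 hx, ENNReal.rpow_one, mul_comm] at h
  exact (ENNReal.mul_le_mul_iff_left (ENNReal.rpow_pos (pos_iff_ne_zero.2 hx0) hx).ne'
    (ENNReal.rpow_ne_top_of_nonneg hb.le hx)).1 h

namespace MeasureTheory

section Multiplier

variable {α 𝕜 : Type*} [MeasurableSpace α] {μ : Measure α} [RCLike 𝕜] {p q : ℝ≥0∞}
  {g : α → 𝕜}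

def mulLpLinearMap (hmul : ∀ f : α → 𝕜, MemLp f p μ → MemLp (fun t => g t * f t) q μ) :
    Lp 𝕜 p μ →ₗ[𝕜] Lp 𝕜 q μ where
  toFun f := (hmul f (Lp.memLp f)).toLp _
  map_add' f₁ f₂ := by
    rw [← MemLp.toLp_add]
    refine MemLp.toLp_congr _ _ ?_
    filter_upwards [Lp.coeFn_add f₁ f₂] with t ht
    simp only [ht, Pi.add_apply, mul_add]
  map_smul' c f := by
    rw [RingHom.id_apply, ← MemLp.toLp_const_smul]
    refine MemLp.toLp_congr _ _ ?_
    filter_upwards [Lp.coeFn_smul c f] with t ht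
    simp only [ht, Pi.smul_apply, smul_eq_mul]
    ring

variable (hmul : ∀ f : α → 𝕜, MemLp f p μ → MemLp (fun t => g t * f t) q μ)
include hmul

theorem coeFn_mulLpLinearMap (f : Lp 𝕜 p μ) :
    mulLpLinearMap hmul f =ᵐ[μ] fun t => g t * f t :=
  MemLp.coeFn_toLp (hmul f (Lp.memLp f))

variable [Fact (1 ≤ p)] [Fact (1 ≤ q)]

theorem continuous_mulLpLinearMap : Continuous (mulLpLinearMap hmul) := by
  refine (mulLpLinearMap hmul).continuous_of_seq_closed_graph fun u f y hu hTu => ?_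
  obtain ⟨φ, hφ, hu_ae⟩ := (tendstoInMeasure_of_tendsto_Lp hu).exists_seq_tendsto_ae
  obtain ⟨ψ, hψ, hTu_ae⟩ := (tendstoInMeasure_of_tendsto_Lp
    (hTu.comp hφ.tendsto_atTop)).exists_seq_tendsto_ae
  have hT_ae : ∀ᵐ t ∂μ, ∀ n, mulLpLinearMap hmul (u n) t = g t * u n t :=
    ae_all_iff.mpr fun n => coeFn_mulLpLinearMap hmul (u n)
  refine Lp.ext ?_
  filter_upwards [hu_ae, hTu_ae, hT_ae, coeFn_mulLpLinearMap hmul f] with t hut hTut hTt hft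
  rw [hft]
  exact tendsto_nhds_unique (hTut.congr fun n => hTt _)
    ((hut.comp hψ.tendsto_atTop).const_mul (g t))

theorem exists_eLpNorm_mul_le_of_forall_memLp_mul :
    ∃ C : ℝ≥0, ∀ f : α → 𝕜, MemLp f p μ →
      eLpNorm (fun t => g t * f t) q μ ≤ C * eLpNorm f p μ := by
  let T : Lp 𝕜 p μ →L[𝕜] Lp 𝕜 q μ := ⟨mulLpLinearMap hmul, continuous_mulLpLinearMap hmul⟩
  refine ⟨‖T‖₊, fun f hf => ?_⟩
  calc eLpNorm (fun t => g t * f t) q μ = ‖T (hf.toLp f)‖ₑ := by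
        rw [Lp.enorm_def]
        refine eLpNorm_congr_ae ?_
        filter_upwards [coeFn_mulLpLinearMap hmul (hf.toLp f), hf.coeFn_toLp] with t hTt hft
        rw [← hft, ← hTt]
        rfl
    _ ≤ ‖T‖ₑ * ‖hf.toLp f‖ₑ := T.le_opENorm _
    _ = ‖T‖₊ * eLpNorm f p μ := by rw [Lp.enorm_toLp]; rfl

end Multiplier

theorem norm_mul_norm_indicator_rpow {α E : Type*} [NormedAddCommGroup E] {g : α → E}
    (s : Set α) {a : ℝ} (ha : 0 < a) (t : α) :
    ‖g t‖ * ‖s.indicator g t‖ ^ a = ‖s.indicator g t‖ ^ (a + 1) := by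
  by_cases ht : t ∈ s
  · rw [Set.indicator_of_mem ht, Real.rpow_add_one' (norm_nonneg _) (by linarith), mul_comm]
  · simp [Set.indicator_of_notMem ht, Real.zero_rpow ha.ne',
      Real.zero_rpow (by linarith : a + 1 ≠ 0)]

section Truncation

variable {α 𝕜 : Type*} [MeasurableSpace α] {μ : Measure α} [IsFiniteMeasure μ] [RCLike 𝕜]
  {p q : ℝ} {g : α → 𝕜} {C : ℝ≥0∞}

theorem eLpNorm_truncation_le (hp : 0 < p) (hpq : p < q) (hg : Measurable g)
    (hC : ∀ f : α → 𝕜, MemLp f (.ofReal q) μ →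
      eLpNorm (fun t => g t * f t) (.ofReal p) μ ≤ C * eLpNorm f (.ofReal q) μ) (n : ℕ) :
    eLpNorm ({t | ‖g t‖ ≤ n}.indicator g) (.ofReal (q * p / (q - p))) μ ≤ C := by
  set G := {t | ‖g t‖ ≤ n}.indicator g
  set r := q * p / (q - p)
  set a := p / (q - p)
  have hqp : 0 < q - p := sub_pos.2 hpq
  have ha : 0 < a := div_pos hp hqp
  have hG_meas : Measurable G := hg.indicator (measurableSet_le hg.norm measurable_const)
  have hG_fin : eLpNorm G (.ofReal r) μ ≠ ∞ := by
    refine ((memLp_top_of_bound hG_meas.aestronglyMeasurable n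
      (Eventually.of_forall fun t => ?_)).mono_exponent le_top).eLpNorm_ne_top
    by_cases ht : ‖g t‖ ≤ n <;> simp [G, ht]
  let F : α → 𝕜 := fun t => ((‖G t‖ ^ a : ℝ) : 𝕜)
  have hF_pt (t : α) : ‖F t‖ = ‖G t‖ ^ a := by
    simp [F, abs_of_nonneg (Real.rpow_nonneg (norm_nonneg (G t)) a)]
  have hF_norm : eLpNorm F (.ofReal q) μ = eLpNorm G (.ofReal r) μ ^ a := by
    calc eLpNorm F (.ofReal q) μ = eLpNorm (fun t => ‖G t‖ ^ a) (.ofReal q) μ :=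
          eLpNorm_congr_norm_ae <| Eventually.of_forall fun t => by
            rw [hF_pt, Real.norm_of_nonneg (by positivity)]
      _ = eLpNorm G (.ofReal r) μ ^ a := by
          rw [eLpNorm_norm_rpow G ha, ← ENNReal.ofReal_mul (by linarith)]
          simp only [r, a, mul_div_assoc]
  have hF : MemLp F (.ofReal q) μ := by
    refine ⟨by fun_prop, ?_⟩
    rw [hF_norm]
    exact ENNReal.rpow_lt_top_of_nonneg ha.le hG_fin
  have hgF_norm : eLpNorm (fun t => g t * F t) (.ofReal p) μ =
      eLpNorm G (.ofReal r) μ ^ (a + 1) := by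
    calc eLpNorm (fun t => g t * F t) (.ofReal p) μ
        = eLpNorm (fun t => ‖G t‖ ^ (a + 1)) (.ofReal p) μ :=
          eLpNorm_congr_norm_ae <| Eventually.of_forall fun t => by
            rw [norm_mul, hF_pt, norm_mul_norm_indicator_rpow _ ha,
              Real.norm_of_nonneg (by positivity)]
      _ = eLpNorm G (.ofReal r) μ ^ (a + 1) := by
          have hpa : p * (a + 1) = r := by
            simp only [r, a]
            field_simp
            ring
          rw [eLpNorm_norm_rpow G (by linarith), ← ENNReal.ofReal_mul hp.le, hpa]
  refine ENNReal.le_of_rpow_add_one_le_mul_rpow hG_fin ha ?_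
  rw [← hgF_norm, ← hF_norm]
  exact hC F hF

theorem eLpNorm_le_of_forall_eLpNorm_mul_le (hp : 0 < p) (hpq : p < q) (hg : Measurable g)
    (hC : ∀ f : α → 𝕜, MemLp f (.ofReal q) μ →
      eLpNorm (fun t => g t * f t) (.ofReal p) μ ≤ C * eLpNorm f (.ofReal q) μ) :
    eLpNorm g (.ofReal (q * p / (q - p))) μ ≤ C := by
  refine Lp.eLpNorm_le_of_ae_tendsto (u := atTop)
    (Eventually.of_forall (eLpNorm_truncation_le hp hpq hg hC))
    (fun n => (hg.indicator (measurableSet_le hg.norm measurable_const)).aestronglyMeasurable)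
    (ae_of_all _ fun t => tendsto_const_nhds.congr' ?_)
  filter_upwards [eventually_ge_atTop ⌈‖g t‖⌉₊] with n hn
  exact (Set.indicator_of_mem (s := {t | ‖g t‖ ≤ n}) (Nat.ceil_le.1 hn) g).symm

end Truncation

end MeasureTheory

theorem multiplier_L2_to_Lp (p : ℝ) (hp1 : 1 ≤ p) (hp2 : p < 2) (g : T1 → ℂ)
    (hgm : Measurable g)
    (hmul : ∀ f : T1 → ℂ, MemLp f 2 volume →
      MemLp (fun t => g t * f t) (ENNReal.ofReal p) volume) :
    MemLp g (ENNReal.ofReal (2 * p / (2 - p))) volume := by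
  have : Fact (1 ≤ ENNReal.ofReal p) := ⟨ENNReal.one_le_ofReal.2 hp1⟩
  obtain ⟨C, hC⟩ := exists_eLpNorm_mul_le_of_forall_memLp_mul hmul
  have hg : eLpNorm g (.ofReal (2 * p / (2 - p))) volume ≤ C :=
    eLpNorm_le_of_forall_eLpNorm_mul_le (by linarith) hp2 hgm (by simpa using hC)
  exact ⟨hgm.aestronglyMeasurable, hg.trans_lt ENNReal.coe_lt_top⟩
end
end

section
/- Let B(z) = ∏_{i=1}^n (z − α_i)/(1 − conj(α_i) z) be a finite Blaschke product with B(0)=0 (α₁ = 0), and for 0 ≤ j ≤ n−1, m ≥ 0 define e_{j,m} = B^m · (∏_{i=1}^{j} (z−α_i)/(1−conj(α_i)z)) · √(1−|α_{j+1}|²)/(1−conj(α_{j+1})z). Then {e_{j,m} : 0 ≤ j ≤ n−1, m ∈ ℕ} is an orthonormal set in H^2(𝕋). -/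
open MeasureTheory Complex ComplexConjugate
open scoped ENNReal

noncomputable section

def singhThukral {n : ℕ} (α : Fin n → ℂ) (j : Fin n) (m : ℕ) : T1 → ℂ :=
  fun t => (blaschke α t) ^ m *
    (∏ i ∈ Finset.Iio j, (zfun t - α i) / (1 - conj (α i) * zfun t)) *
    ((Real.sqrt (1 - ‖α j‖ ^ 2) : ℂ) / (1 - conj (α j) * zfun t))

/-!
On the unit circle every Blaschke factor `b_a` is unimodular, so `conj b_a = b_a⁻¹`. Write
`e_{j,m} = M_{j,m} · k_{α_j}`, where `M_{j,m} = ∏ b_{α_i} ^ (m + [i < j])` and `k_a` is the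
normalized Szegő kernel. If `(l, k) ≤ (m, j)` lexicographically, every exponent of `M_{k,l}` is
at most the corresponding one of `M_{j,m}`, so on the circle
`e_{j,m} · conj e_{k,l} = f · conj k_{α_k}` with `f = (M_{j,m} / M_{k,l}) · k_{α_j}` holomorphic
on the closed disc. Cauchy's formula gives the reproducing property
`⟨f, k_a⟩ = √(1 - |a|²) f(a)`: this is `1` on the diagonal, and `0` when the inequality is
strict, because then `f` keeps a factor `b_{α_k}`, which vanishes at `α_k`. The remaining case
follows by conjugate symmetry.
-/

open Metric Real

lemma norm_zfun (t : T1) : ‖zfun t‖ = 1 :=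
  Circle.norm_coe _

lemma zfun_coe (s : ℝ) : zfun (s : T1) = circleMap 0 1 (2 * π * s) := by
  rw [zfun, fourier_coe_apply, circleMap]
  push_cast
  ring_nf

lemma integral_comp_zfun (G : ℂ → ℂ) : ∫ t : T1, G (zfun t) = circleAverage G 0 1 := by
  rw [← AddCircle.intervalIntegral_preimage 1 0, circleAverage_def]
  simp only [zfun_coe]
  rw [intervalIntegral.integral_comp_mul_left (fun θ => G (circleMap 0 1 θ)) (by positivity)]
  norm_num

section UnitDisc

variable {a z : ℂ}

lemma one_sub_conj_mul_ne_zero (ha : ‖a‖ < 1) (hz : ‖z‖ ≤ 1) : 1 - conj a * z ≠ 0 := by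
  intro h
  have : ‖conj a * z‖ = 1 := by rw [← sub_eq_zero.1 h, norm_one]
  rw [norm_mul, RCLike.norm_conj] at this
  nlinarith [norm_nonneg a, norm_nonneg z]

lemma conj_one_sub_conj_mul (hz : ‖z‖ = 1) : conj (1 - conj a * z) = (z - a) / z := by
  have hz0 : z ≠ 0 := norm_ne_zero_iff.1 (by rw [hz]; exact one_ne_zero)
  rw [map_sub, map_one, map_mul, conj_conj, ← Complex.inv_eq_conj hz]
  field_simp

def normalizedSzegoKernel (a z : ℂ) : ℂ := (Real.sqrt (1 - ‖a‖ ^ 2) : ℂ) / (1 - conj a * z)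

lemma sqrt_mul_normalizedSzegoKernel_self (ha : ‖a‖ < 1) :
    (Real.sqrt (1 - ‖a‖ ^ 2) : ℂ) * normalizedSzegoKernel a a = 1 := by
  have hpos : 0 < 1 - ‖a‖ ^ 2 := by nlinarith [norm_nonneg a]
  rw [normalizedSzegoKernel, mul_div_assoc', ← Complex.ofReal_mul, Real.mul_self_sqrt hpos.le,
    Complex.conj_mul']
  push_cast
  exact div_self (by exact_mod_cast hpos.ne')

lemma differentiableOn_normalizedSzegoKernel (ha : ‖a‖ < 1) :
    DifferentiableOn ℂ (normalizedSzegoKernel a) (closedBall 0 1) := fun z hz =>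
  DifferentiableAt.differentiableWithinAt <| by
    unfold normalizedSzegoKernel
    exact (differentiableAt_const _).div (by fun_prop)
      (one_sub_conj_mul_ne_zero ha (by simpa using hz))

/-- The reproducing property of the Szegő kernel: Cauchy's formula read on the circle. -/
lemma integral_mul_conj_normalizedSzegoKernel {f : ℂ → ℂ} (hf : DiffContOnCl ℂ f (ball 0 1))
    (ha : ‖a‖ < 1) :
    ∫ t : T1, f (zfun t) * conj (normalizedSzegoKernel a (zfun t))
      = Real.sqrt (1 - ‖a‖ ^ 2) * f a := by
  have hconj : ∀ t : T1, f (zfun t) * conj (normalizedSzegoKernel a (zfun t))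
      = (Real.sqrt (1 - ‖a‖ ^ 2) : ℂ) • ((zfun t - 0) / (zfun t - a)) • f (zfun t) := by
    intro t
    rw [normalizedSzegoKernel, map_div₀, Complex.conj_ofReal, conj_one_sub_conj_mul (norm_zfun t),
      smul_eq_mul, smul_eq_mul, sub_zero, div_div_eq_mul_div]
    ring
  have hf' : DiffContOnCl ℂ f (ball 0 |1|) := by rwa [abs_one]
  simp_rw [hconj]
  rw [integral_comp_zfun (fun z => (Real.sqrt (1 - ‖a‖ ^ 2) : ℂ) • ((z - 0) / (z - a)) • f z),
    circleAverage_fun_smul, hf'.circleAverage_smul_div (by simpa using ha), smul_eq_mul]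

def blaschkeFactor (a z : ℂ) : ℂ := (z - a) / (1 - conj a * z)

@[simp]
lemma blaschkeFactor_self (a : ℂ) : blaschkeFactor a a = 0 := by
  simp [blaschkeFactor]

lemma blaschkeFactor_ne_zero (ha : ‖a‖ < 1) (hz : ‖z‖ = 1) : blaschkeFactor a z ≠ 0 := by
  refine div_ne_zero (sub_ne_zero.2 ?_) (one_sub_conj_mul_ne_zero ha hz.le)
  rintro rfl
  exact ha.ne hz

lemma conj_blaschkeFactor (hz : ‖z‖ = 1) : conj (blaschkeFactor a z) = (blaschkeFactor a z)⁻¹ := by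
  have hz0 : z ≠ 0 := norm_ne_zero_iff.1 (by rw [hz]; exact one_ne_zero)
  rw [blaschkeFactor, map_div₀, conj_one_sub_conj_mul hz, map_sub, ← Complex.inv_eq_conj hz,
    inv_div]
  field_simp

lemma differentiableOn_blaschkeFactor (ha : ‖a‖ < 1) :
    DifferentiableOn ℂ (blaschkeFactor a) (closedBall 0 1) := fun z hz =>
  DifferentiableAt.differentiableWithinAt <| by
    unfold blaschkeFactor
    exact (by fun_prop : DifferentiableAt ℂ (fun w => w - a) z).div (by fun_prop)
      (one_sub_conj_mul_ne_zero ha (by simpa using hz))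

end UnitDisc

section BlaschkeMonomial

variable {ι : Type*} [Fintype ι] {α : ι → ℂ} {c d : ι → ℕ} {z : ℂ}

def blaschkeMonomial (α : ι → ℂ) (c : ι → ℕ) (z : ℂ) : ℂ := ∏ i, blaschkeFactor (α i) z ^ c i

@[simp]
lemma blaschkeMonomial_zero : blaschkeMonomial α 0 z = 1 := by
  simp [blaschkeMonomial]

lemma blaschkeMonomial_apply_eq_zero {k : ι} (hk : c k ≠ 0) : blaschkeMonomial α c (α k) = 0 :=
  Finset.prod_eq_zero (Finset.mem_univ k) (by simp [hk])

lemma conj_blaschkeMonomial (hz : ‖z‖ = 1) :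
    conj (blaschkeMonomial α c z) = (blaschkeMonomial α c z)⁻¹ := by
  simp only [blaschkeMonomial, map_prod, map_pow, conj_blaschkeFactor hz, inv_pow,
    Finset.prod_inv_distrib]

lemma blaschkeMonomial_mul_conj (hα : ∀ i, ‖α i‖ < 1) (hz : ‖z‖ = 1) (hdc : d ≤ c) :
    blaschkeMonomial α c z * conj (blaschkeMonomial α d z) = blaschkeMonomial α (c - d) z := by
  rw [conj_blaschkeMonomial hz, blaschkeMonomial, blaschkeMonomial, blaschkeMonomial,
    ← Finset.prod_inv_distrib, ← Finset.prod_mul_distrib]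
  exact Finset.prod_congr rfl fun i _ =>
    (pow_sub₀ _ (blaschkeFactor_ne_zero (hα i) hz) (hdc i)).symm

lemma differentiableOn_blaschkeMonomial (hα : ∀ i, ‖α i‖ < 1) :
    DifferentiableOn ℂ (blaschkeMonomial α c) (closedBall 0 1) := by
  unfold blaschkeMonomial
  exact DifferentiableOn.fun_finsetProd fun i _ =>
    (differentiableOn_blaschkeFactor (hα i)).pow (c i)

end BlaschkeMonomial

section Exponent

variable {ι : Type*} [LinearOrder ι]

/-- The multiplicity of the factor `b_{α_i}` in `e_{j,m} = B^m · ∏_{i<j} b_{α_i} · k_{α_j}`. -/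
def singhThukralExponent (j : ι) (m : ℕ) (i : ι) : ℕ := m + if i < j then 1 else 0

variable {j k : ι} {m l : ℕ}

lemma singhThukralExponent_le_of_toLex_le (h : toLex (l, k) ≤ toLex (m, j)) :
    singhThukralExponent k l ≤ singhThukralExponent j m := by
  intro i
  simp only [singhThukralExponent]
  rcases Prod.Lex.toLex_le_toLex.1 h with h | ⟨rfl, h⟩
  · split_ifs <;> omega
  · have : i < k → i < j := fun hi => hi.trans_le h
    split_ifs <;> simp_all

lemma singhThukralExponent_lt_of_toLex_lt (h : toLex (l, k) < toLex (m, j)) :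
    singhThukralExponent k l k < singhThukralExponent j m k := by
  simp only [singhThukralExponent, lt_irrefl, if_false]
  rcases Prod.Lex.toLex_lt_toLex.1 h with h | ⟨rfl, h⟩
  · split_ifs <;> omega
  · simp [h]

end Exponent

lemma singhThukral_eq {n : ℕ} (α : Fin n → ℂ) (j : Fin n) (m : ℕ) :
    singhThukral α j m = fun t => blaschkeMonomial α (singhThukralExponent j m) (zfun t) *
      normalizedSzegoKernel (α j) (zfun t) := by
  funext t
  simp only [singhThukral, blaschke, blaschkeMonomial, singhThukralExponent, pow_add,
    Finset.prod_mul_distrib, Finset.prod_pow, pow_ite, pow_one, pow_zero]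
  rw [← Finset.prod_filter, Finset.filter_gt_eq_Iio]
  rfl

lemma conj_hInner (f g : T1 → ℂ) : conj (hInner f g) = hInner g f := by
  rw [hInner, hInner, ← integral_conj]
  simp_rw [map_mul, conj_conj, mul_comm]

section Orthonormal

variable {n : ℕ} {α : Fin n → ℂ} {j k : Fin n} {m l : ℕ}

lemma hInner_singhThukral_of_toLex_le (hα : ∀ i, ‖α i‖ < 1) (h : toLex (l, k) ≤ toLex (m, j)) :
    hInner (singhThukral α j m) (singhThukral α k l)
      = Real.sqrt (1 - ‖α k‖ ^ 2) * (blaschkeMonomial α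
          (singhThukralExponent j m - singhThukralExponent k l) (α k) *
        normalizedSzegoKernel (α j) (α k)) := by
  set c := singhThukralExponent j m - singhThukralExponent k l
  have hpt : ∀ t, singhThukral α j m t * conj (singhThukral α k l t)
      = blaschkeMonomial α c (zfun t) * normalizedSzegoKernel (α j) (zfun t) *
        conj (normalizedSzegoKernel (α k) (zfun t)) := by
    intro t
    rw [singhThukral_eq, singhThukral_eq, map_mul, ← blaschkeMonomial_mul_conj hα (norm_zfun t)
      (singhThukralExponent_le_of_toLex_le h)]
    ring
  have hf : DiffContOnCl ℂ (fun z => blaschkeMonomial α c z * normalizedSzegoKernel (α j) z)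
      (ball 0 1) := by
    refine DifferentiableOn.diffContOnCl ?_
    rw [closure_ball _ one_ne_zero]
    exact (differentiableOn_blaschkeMonomial hα).mul (differentiableOn_normalizedSzegoKernel (hα j))
  rw [hInner]
  simp_rw [hpt]
  exact integral_mul_conj_normalizedSzegoKernel hf (hα k)

lemma hInner_singhThukral_self (hα : ∀ i, ‖α i‖ < 1) :
    hInner (singhThukral α j m) (singhThukral α j m) = 1 := by
  rw [hInner_singhThukral_of_toLex_le hα le_rfl, tsub_self, blaschkeMonomial_zero, one_mul,
    sqrt_mul_normalizedSzegoKernel_self (hα j)]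

lemma hInner_singhThukral_of_toLex_lt (hα : ∀ i, ‖α i‖ < 1) (h : toLex (l, k) < toLex (m, j)) :
    hInner (singhThukral α j m) (singhThukral α k l) = 0 := by
  rw [hInner_singhThukral_of_toLex_le hα h.le, blaschkeMonomial_apply_eq_zero, zero_mul, mul_zero]
  exact (Nat.sub_pos_of_lt (singhThukralExponent_lt_of_toLex_lt h)).ne'

end Orthonormal

theorem singhThukral_orthonormal_general (n : ℕ) (α : Fin n → ℂ)
    (hα : ∀ i, ‖α i‖ < 1) :
    ∀ (j k : Fin n) (m l : ℕ),
      hInner (singhThukral α j m) (singhThukral α k l) =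
        if j = k ∧ m = l then 1 else 0 := by
  intro j k m l
  rcases lt_trichotomy (toLex (l, k)) (toLex (m, j)) with h | h | h
  · rw [hInner_singhThukral_of_toLex_lt hα h, if_neg]
    rintro ⟨rfl, rfl⟩
    exact h.ne rfl
  · obtain ⟨rfl, rfl⟩ := Prod.ext_iff.1 (toLex.injective h)
    rw [hInner_singhThukral_self hα, if_pos ⟨rfl, rfl⟩]
  · rw [← conj_hInner, hInner_singhThukral_of_toLex_lt hα h, map_zero, if_neg]
    rintro ⟨rfl, rfl⟩
    exact h.ne rfl

theorem singhThukral_orthonormal (n : ℕ) (hn : 0 < n) (α : Fin n → ℂ)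
    (hα : ∀ i, ‖α i‖ < 1) (hα0 : α ⟨0, hn⟩ = 0) :
    ∀ (j k : Fin n) (m l : ℕ),
      hInner (singhThukral α j m) (singhThukral α k l) =
        if j = k ∧ m = l then 1 else 0 :=
  singhThukral_orthonormal_general n α hα
end
end
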